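/- arXiv:math/0506404 — 5 statements merged into one kernel-verified Lean document; each statement's English description precedes it below -/
import Mathlib

section
/- Let I, I′, I″ be bounded closed intervals in ℝ with I′ ⊆ I″, |I′| > 0, |I″| > 0, and suppose dist(I, I″) ≥ |I″|. Then J(I, I′) ≤ 4 · (|I′|/|I″|) · J(I, I″). -/
/-!
For `x` to the left of `[c, d]` the inner integral is `(d - c) / ((c - x) * (d - x))`.
If `a'' - x ≥ b'' - a''`, then `b'' - x ≤ 2 (a'' - x)`, so for `[a', b'] ⊆ [a'', b'']`
the denominators satisfy `(a'' - x) (b'' - x) ≤ 2 (a'' - x)² ≤ 2 (a' - x) (b' - x)`; this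
compares the inner integrals pointwise in `x`, and integrating over `x ∈ I` gives the bound.
The case where `I` lies to the right of `I''` follows by the reflection `x ↦ -x`.
-/

/-- `J(I, I') = ∫_{I×I'} |x-y|^{-2}` for `I = [a,b]`, `I' = [c,d]`. -/
noncomputable def Jint (a b c d : ℝ) : ℝ := ∫ x in a..b, ∫ y in c..d, ((x - y) ^ 2)⁻¹

open Set intervalIntegral

lemma integral_inv_sq_sub_of_lt {x c d : ℝ} (hxc : x < c) (hcd : c ≤ d) :
    ∫ y in c..d, ((x - y) ^ 2)⁻¹ = (d - c) / ((c - x) * (d - x)) := by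
  have hne : ∀ y ∈ uIcc c d, x - y ≠ 0 := fun y hy => by
    rw [uIcc_of_le hcd] at hy
    linarith [hy.1]
  rw [integral_eq_sub_of_hasDerivAt (f := fun y => (x - y)⁻¹)]
  · rw [inv_sub_inv (hne d right_mem_uIcc) (hne c left_mem_uIcc)]
    congr 1 <;> ring
  · intro y hy
    exact (((hasDerivAt_id' y).const_sub x).inv (hne y hy)).congr_deriv (by ring)
  · exact ContinuousOn.intervalIntegrable <|
      ((continuousOn_const.sub continuousOn_id).pow 2).inv₀ fun y hy => pow_ne_zero 2 (hne y hy)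

lemma continuousOn_integral_inv_sq_sub {c d : ℝ} (hcd : c ≤ d) :
    ContinuousOn (fun x => ∫ y in c..d, ((x - y) ^ 2)⁻¹) (Iio c) := by
  refine ContinuousOn.congr ?_ fun x (hx : x < c) => integral_inv_sq_sub_of_lt hx hcd
  refine continuousOn_const.div (by fun_prop) fun x (hx : x < c) => ?_
  have : 0 < d - x := by linarith
  exact (mul_pos (sub_pos.2 hx) this).ne'

lemma integral_inv_sq_sub_le_of_subset {x a' b' a'' b'' : ℝ} (ha' : a'' ≤ a') (hI' : a' < b')
    (hb' : b' ≤ b'') (hx : b'' - a'' ≤ a'' - x) :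
    ∫ y in a'..b', ((x - y) ^ 2)⁻¹ ≤
      4 * ((b' - a') / (b'' - a'')) * ∫ y in a''..b'', ((x - y) ^ 2)⁻¹ := by
  have hxa'' : x < a'' := by linarith
  have hxb'' : x < b'' := by linarith
  rw [integral_inv_sq_sub_of_lt (hxa''.trans_le ha') hI'.le,
    integral_inv_sq_sub_of_lt hxa'' (by linarith)]
  have hdenom : (a'' - x) * (b'' - x) / 4 ≤ (a' - x) * (b' - x) := by
    nlinarith
  calc (b' - a') / ((a' - x) * (b' - x))
      ≤ (b' - a') / ((a'' - x) * (b'' - x) / 4) :=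
        div_le_div_of_nonneg_left (by linarith)
          (div_pos (mul_pos (sub_pos.2 hxa'') (sub_pos.2 hxb'')) four_pos) hdenom
    _ = 4 * ((b' - a') / (b'' - a'')) * ((b'' - a'') / ((a'' - x) * (b'' - x))) := by
        have : b'' - a'' ≠ 0 := by linarith
        field_simp

lemma Jint_subinterval_le_of_le_sub {a b a' b' a'' b'' : ℝ} (hI : a ≤ b) (ha' : a'' ≤ a')
    (hI' : a' < b') (hb' : b' ≤ b'') (hdist : b'' - a'' ≤ a'' - b) :
    Jint a b a' b' ≤ 4 * ((b' - a') / (b'' - a'')) * Jint a b a'' b'' := by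
  have hIc : ∀ {c}, b < c → uIcc a b ⊆ Iio c := fun hbc x hx => by
    rw [uIcc_of_le hI] at hx
    exact hx.2.trans_lt hbc
  have hba'' : b < a'' := by linarith
  rw [Jint, Jint, ← integral_const_mul]
  refine integral_mono_on hI ?_ ?_ fun x hx => integral_inv_sq_sub_le_of_subset ha' hI' hb' ?_
  · exact ((continuousOn_integral_inv_sq_sub hI'.le).mono
      (hIc (hba''.trans_le ha'))).intervalIntegrable
  · exact ((continuousOn_integral_inv_sq_sub (by linarith)).mono
      (hIc hba'')).intervalIntegrable.const_mul _
  · linarith [hx.2]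

lemma Jint_neg (a b c d : ℝ) : Jint (-b) (-a) (-d) (-c) = Jint a b c d := by
  rw [Jint, ← integral_comp_neg]
  refine integral_congr fun x _ => ?_
  rw [← integral_comp_neg]
  ring_nf

theorem Jint_subinterval_bound_general (a b a' b' a'' b'' : ℝ)
    (hI : a ≤ b) (hI' : a' < b')
    (hsub : a'' ≤ a' ∧ b' ≤ b'')
    (hdist : b'' - a'' ≤ a'' - b ∨ b'' - a'' ≤ a - b'') :
    Jint a b a' b' ≤ 4 * ((b' - a') / (b'' - a'')) * Jint a b a'' b'' := by
  obtain ⟨ha', hb'⟩ := hsub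
  rcases hdist with hleft | hright
  · exact Jint_subinterval_le_of_le_sub hI ha' hI' hb' hleft
  · have := Jint_subinterval_le_of_le_sub (a := -b) (b := -a) (a' := -b') (b' := -a')
      (a'' := -b'') (b'' := -a'') (by linarith) (by linarith) (by linarith) (by linarith)
      (by linarith)
    rwa [Jint_neg, Jint_neg, neg_sub_neg, neg_sub_neg] at this

/-- If `I' ⊆ I''` are nondegenerate closed intervals and `dist(I, I'') ≥ |I''|`, then
`J(I, I') ≤ 4 (|I'|/|I''|) J(I, I'')`.  The distance hypothesis is expressed as a
disjunction over the two possible relative positions of `I` and `I''`. -/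
theorem Jint_subinterval_bound (a b a' b' a'' b'' : ℝ)
    (hI : a ≤ b) (hI' : a' < b') (hI'' : a'' < b'')
    (hsub : a'' ≤ a' ∧ b' ≤ b'')
    (hdist : b'' - a'' ≤ a'' - b ∨ b'' - a'' ≤ a - b'') :
    Jint a b a' b' ≤ 4 * ((b' - a') / (b'' - a'')) * Jint a b a'' b'' :=
  Jint_subinterval_bound_general a b a' b' a'' b'' hI hI' hsub hdist
end

section
/- Let I and I″ be disjoint bounded closed intervals in ℝ with dist(I, I″) ≥ |I″| > 0, let I′ ⊆ I″, and define f(x) = ∫_I |x − y|^{−2} dy for x ∉ I. Then for every x′ ∈ I′ and every x″ ∈ I″ one has f(x′) ≤ 4 · f(x″). -/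
/-!
The integrands compare pointwise: if `|x'' - y| ≤ 2 |x' - y|` for all `y ∈ I`, then
`|x' - y|^{-2} ≤ 4 |x'' - y|^{-2}` on `I`, and integrating gives `f(x') ≤ 4 f(x'')`. That pointwise bound is the triangle
inequality `|x'' - y| ≤ |x'' - x'| + |x' - y|`, since `|x'' - x'| ≤ |I''| ≤ dist(I, I'') ≤ |x' - y|`.
-/

/-- `f(x) = ∫_I |x - y|^{-2} dy` for `I = [a,b]`. -/
noncomputable def fInt (a b : ℝ) (x : ℝ) : ℝ := ∫ y in a..b, ((x - y) ^ 2)⁻¹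

open Set MeasureTheory

theorem intervalIntegrable_inv_sq_sub {a b x : ℝ} (hx : x ∉ uIcc a b) :
    IntervalIntegrable (fun y => ((x - y) ^ 2)⁻¹) volume a b :=
  (ContinuousOn.inv₀ (by fun_prop) fun y hy =>
    pow_ne_zero 2 (sub_ne_zero.2 fun (h : x = y) => hx (h ▸ hy))).intervalIntegrable

theorem fInt_le_sq_mul_fInt {a b x z C : ℝ} (hab : a ≤ b) (hz : z ∉ Icc a b)
    (h : ∀ y ∈ Icc a b, dist z y ≤ C * dist x y) :
    fInt a b x ≤ C ^ 2 * fInt a b z := by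
  have hx : x ∉ Icc a b := fun hx => hz <| by
    simpa [dist_le_zero.1 (by simpa using h x hx)] using hx
  have hpoint : ∀ y ∈ Icc a b, ((x - y) ^ 2)⁻¹ ≤ C ^ 2 * ((z - y) ^ 2)⁻¹ := by
    intro y hy
    have hsq : (z - y) ^ 2 ≤ C ^ 2 * (x - y) ^ 2 := by
      simpa only [Real.dist_eq, mul_pow, sq_abs] using pow_le_pow_left₀ dist_nonneg (h y hy) 2
    have hz_pos : 0 < (z - y) ^ 2 := sq_pos_of_ne_zero (sub_ne_zero.2 fun (h : z = y) => hz (h ▸ hy))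
    have hx_pos : 0 < (x - y) ^ 2 := sq_pos_of_ne_zero (sub_ne_zero.2 fun (h : x = y) => hx (h ▸ hy))
    rw [inv_eq_one_div, ← div_eq_mul_inv, div_le_div_iff₀ hx_pos hz_pos]
    linarith
  rw [← uIcc_of_le hab] at hx hz
  rw [fInt, fInt, ← intervalIntegral.integral_const_mul]
  exact intervalIntegral.integral_mono_on hab (intervalIntegrable_inv_sq_sub hx)
    ((intervalIntegrable_inv_sq_sub hz).const_mul _) hpoint

theorem sub_le_dist_of_mem_Icc {a b a'' b'' : ℝ}
    (hdist : b'' - a'' ≤ a'' - b ∨ b'' - a'' ≤ a - b'') :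
    ∀ x ∈ Icc a'' b'', ∀ y ∈ Icc a b, b'' - a'' ≤ dist x y := by
  rintro x ⟨hx₁, hx₂⟩ y ⟨hy₁, hy₂⟩
  rw [Real.dist_eq, le_abs]
  rcases hdist with hleft | hright
  · exact Or.inl (by linarith)
  · exact Or.inr (by linarith)

/-- The hypothesis `hdist` states `dist(I, I'') ≥ |I''|` separately for the two possible
relative positions of `I` and `I''`. -/
theorem fInt_comparison_general (a b a' b' a'' b'' : ℝ)
    (hI : a ≤ b) (hI'' : a'' < b'')
    (hsub : a'' ≤ a' ∧ b' ≤ b'')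
    (hdist : b'' - a'' ≤ a'' - b ∨ b'' - a'' ≤ a - b'') :
    ∀ x' ∈ Set.Icc a' b', ∀ x'' ∈ Set.Icc a'' b'',
      fInt a b x' ≤ 4 * fInt a b x'' := by
  intro x' hx' x'' hx''
  have hx'_mem : x' ∈ Icc a'' b'' := Icc_subset_Icc hsub.1 hsub.2 hx'
  have hgap := sub_le_dist_of_mem_Icc hdist
  have hx''_notMem : x'' ∉ Icc a b := fun h => by
    linarith [hgap x'' hx'' x'' h, dist_self x'']
  have hkernel : ∀ y ∈ Icc a b, dist x'' y ≤ 2 * dist x' y := fun y hy =>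
    calc dist x'' y ≤ dist x'' x' + dist x' y := dist_triangle _ _ _
      _ ≤ (b'' - a'') + dist x' y := by
          gcongr; exact Real.dist_le_of_mem_Icc hx'' hx'_mem
      _ ≤ 2 * dist x' y := by linarith [hgap x' hx'_mem y hy]
  simpa [show (2 : ℝ) ^ 2 = 4 by norm_num] using fInt_le_sq_mul_fInt hI hx''_notMem hkernel

/-- If `I = [a,b]` and `I'' = [a'',b'']` are disjoint closed intervals with
`dist(I, I'') ≥ |I''| > 0` and `I' = [a',b'] ⊆ I''`, then `f(x') ≤ 4 f(x'')` for every
`x' ∈ I'` and `x'' ∈ I''`.  The distance hypothesis is expressed as a disjunction over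
the two possible relative positions of `I` and `I''`. -/
theorem fInt_comparison (a b a' b' a'' b'' : ℝ)
    (hI : a ≤ b) (hI' : a' ≤ b') (hI'' : a'' < b'')
    (hsub : a'' ≤ a' ∧ b' ≤ b'')
    (hdist : b'' - a'' ≤ a'' - b ∨ b'' - a'' ≤ a - b'') :
    ∀ x' ∈ Set.Icc a' b', ∀ x'' ∈ Set.Icc a'' b'',
      fInt a b x' ≤ 4 * fInt a b x'' :=
  fInt_comparison_general a b a' b' a'' b'' hI hI'' hsub hdist
end

section
/- Let 1 < α′ < α < 2. There exists an integer l₁* ≥ 2 such that for every integer l₁ ≥ l₁*, the sequence defined by l₀ = 1 and l_k = ⌊l_{k−1}^{α−1}⌋ · l_{k−1} for k ≥ 2 satisfies, for all k ≥ 2: (i) l_k ≥ 2·l_{k−1}; (ii) l_k ≤ l_{k−1}^{α}; and (iii) 3·l_{k−1} + 6·l_{k−2} ≤ l_k^{α′/α}. -/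
/-- The sequence of scales: `l₀ = 1`, `l₁` given, and `l_k = ⌊l_{k-1}^{α-1}⌋ · l_{k-1}`. -/
noncomputable def scaleSeq (α : ℝ) (l₁ : ℕ) : ℕ → ℕ
  | 0 => 1
  | 1 => l₁
  | (k + 2) => Nat.floor ((scaleSeq α l₁ (k + 1) : ℝ) ^ (α - 1)) * scaleSeq α l₁ (k + 1)

private lemma rpow_threshold {c e L : ℝ} (hc : 1 ≤ c) (he : 0 < e) (hL : c ^ e⁻¹ ≤ L) :
    c ≤ L ^ e := by
  have hc0 : (0:ℝ) ≤ c := by linarith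
  have h0 : (0:ℝ) ≤ c ^ e⁻¹ := Real.rpow_nonneg hc0 _
  calc c = (c ^ e⁻¹) ^ e := by
        rw [← Real.rpow_mul hc0, inv_mul_cancel₀ he.ne', Real.rpow_one]
    _ ≤ L ^ e := Real.rpow_le_rpow h0 hL he.le

/-- Basic growth properties of the scales: for `l₁` large enough and all `k ≥ 2`,
(i) `l_k ≥ 2 l_{k-1}`, (ii) `l_k ≤ l_{k-1}^α`, and (iii) `3 l_{k-1} + 6 l_{k-2} ≤ l_k^{α'/α}`. -/
theorem scale_growth (α α' : ℝ) (h1 : 1 < α') (h2 : α' < α) (h3 : α < 2) :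
    ∃ l₁star : ℕ, 2 ≤ l₁star ∧ ∀ l₁ : ℕ, l₁star ≤ l₁ → ∀ k : ℕ, 2 ≤ k →
      2 * scaleSeq α l₁ (k - 1) ≤ scaleSeq α l₁ k ∧
      (scaleSeq α l₁ k : ℝ) ≤ (scaleSeq α l₁ (k - 1) : ℝ) ^ α ∧
      3 * (scaleSeq α l₁ (k - 1) : ℝ) + 6 * (scaleSeq α l₁ (k - 2) : ℝ) ≤
        (scaleSeq α l₁ k : ℝ) ^ (α' / α) := by
  have hα1 : 1 < α := h1.trans h2
  have hβ : 0 < α - 1 := by linarith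
  have hγ : 0 < α' - 1 := by linarith
  refine ⟨max 2 (max ⌈(2:ℝ) ^ (α-1)⁻¹⌉₊ ⌈(18:ℝ) ^ (α'-1)⁻¹⌉₊), le_max_left _ _, ?_⟩
  intro l₁ hl₁ k hk
  -- key facts about any L ≥ l₁
  have hbig : ∀ L : ℕ, l₁ ≤ L →
      (2:ℝ) ≤ (L:ℝ) ^ (α-1) ∧ (18:ℝ) ≤ (L:ℝ) ^ (α'-1) ∧ 2 ≤ L := by
    intro L hL
    have h2L : 2 ≤ L := le_trans (le_trans (le_max_left _ _) hl₁) hL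
    have hA : ⌈(2:ℝ) ^ (α-1)⁻¹⌉₊ ≤ L :=
      le_trans (le_trans (le_trans (le_max_left _ _) (le_max_right _ _)) hl₁) hL
    have hB : ⌈(18:ℝ) ^ (α'-1)⁻¹⌉₊ ≤ L :=
      le_trans (le_trans (le_trans (le_max_right _ _) (le_max_right _ _)) hl₁) hL
    have hA' : (2:ℝ) ^ (α-1)⁻¹ ≤ (L:ℝ) :=
      le_trans (Nat.le_ceil _) (by exact_mod_cast hA)
    have hB' : (18:ℝ) ^ (α'-1)⁻¹ ≤ (L:ℝ) :=
      le_trans (Nat.le_ceil _) (by exact_mod_cast hB)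
    exact ⟨rpow_threshold (by norm_num) hβ hA',
      rpow_threshold (by norm_num) hγ hB', h2L⟩
  have hfloor : ∀ L : ℕ, l₁ ≤ L → 2 ≤ ⌊(L:ℝ) ^ (α-1)⌋₊ := by
    intro L hL
    exact Nat.le_floor (by exact_mod_cast (hbig L hL).1)
  have hmono : ∀ m, 1 ≤ m → l₁ ≤ scaleSeq α l₁ m := by
    intro m hm
    induction m, hm using Nat.le_induction with
    | base => exact le_refl _
    | succ n hn ih =>
      obtain ⟨j, rfl⟩ : ∃ j, n = j + 1 := ⟨n - 1, by omega⟩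
      show l₁ ≤ ⌊(scaleSeq α l₁ (j+1) : ℝ) ^ (α-1)⌋₊ * scaleSeq α l₁ (j+1)
      calc l₁ ≤ scaleSeq α l₁ (j+1) := ih
        _ = 1 * scaleSeq α l₁ (j+1) := (one_mul _).symm
        _ ≤ ⌊(scaleSeq α l₁ (j+1) : ℝ) ^ (α-1)⌋₊ * scaleSeq α l₁ (j+1) :=
            Nat.mul_le_mul_right _ (le_trans (by norm_num) (hfloor _ ih))
  have hmono0 : ∀ m, scaleSeq α l₁ m ≤ scaleSeq α l₁ (m+1) := by
    intro m
    match m with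
    | 0 =>
      show scaleSeq α l₁ 0 ≤ scaleSeq α l₁ 1
      show 1 ≤ l₁
      omega
    | j + 1 =>
      show scaleSeq α l₁ (j+1) ≤ ⌊(scaleSeq α l₁ (j+1) : ℝ) ^ (α-1)⌋₊ * scaleSeq α l₁ (j+1)
      calc scaleSeq α l₁ (j+1) = 1 * scaleSeq α l₁ (j+1) := (one_mul _).symm
        _ ≤ _ := Nat.mul_le_mul_right _
            (le_trans (by norm_num) (hfloor _ (hmono _ (by omega))))
  obtain ⟨m, rfl⟩ : ∃ m, k = m + 2 := ⟨k - 2, by omega⟩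
  have hk1 : m + 2 - 1 = m + 1 := rfl
  have hk2 : m + 2 - 2 = m := rfl
  set L := scaleSeq α l₁ (m+1) with hLdef
  have hL : l₁ ≤ L := hmono _ (by omega)
  obtain ⟨hb1, hb2, hb3⟩ := hbig L hL
  have hL2 : (2:ℝ) ≤ (L:ℝ) := by exact_mod_cast hb3
  have hLpos : (0:ℝ) < (L:ℝ) := by linarith
  have hseq : scaleSeq α l₁ (m+2) = ⌊(L:ℝ) ^ (α-1)⌋₊ * L := rfl
  have hflo : 2 ≤ ⌊(L:ℝ) ^ (α-1)⌋₊ := hfloor L hL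
  have hrpow_mul : (L:ℝ) ^ (α-1) * (L:ℝ) = (L:ℝ) ^ α := by
    have h := Real.rpow_add hLpos (α-1) 1
    rw [Real.rpow_one] at h
    rw [← h]; norm_num
  refine ⟨?_, ?_, ?_⟩
  · rw [hk1, hseq]
    exact Nat.mul_le_mul_right _ hflo
  · rw [hk1, hseq]
    push_cast
    calc (⌊(L:ℝ) ^ (α-1)⌋₊ : ℝ) * (L:ℝ) ≤ (L:ℝ) ^ (α-1) * (L:ℝ) :=
          mul_le_mul_of_nonneg_right (Nat.floor_le (Real.rpow_nonneg hLpos.le _)) hLpos.le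
      _ = (L:ℝ) ^ α := hrpow_mul
  · rw [hk1, hk2]
    have hprev : (scaleSeq α l₁ m : ℝ) ≤ (L:ℝ) := by exact_mod_cast hmono0 m
    -- lower bound on l_{m+2}
    have hKlow : (L:ℝ) ^ α / 2 ≤ (scaleSeq α l₁ (m+2) : ℝ) := by
      rw [hseq]
      push_cast
      have h1' : (L:ℝ) ^ (α-1) - 1 ≤ (⌊(L:ℝ) ^ (α-1)⌋₊ : ℝ) :=
        (Nat.sub_one_lt_floor _).le
      have h2' : (L:ℝ) ^ (α-1) / 2 ≤ (L:ℝ) ^ (α-1) - 1 := by linarith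
      calc (L:ℝ) ^ α / 2 = ((L:ℝ) ^ (α-1) / 2) * (L:ℝ) := by
            rw [← hrpow_mul]; ring
        _ ≤ (⌊(L:ℝ) ^ (α-1)⌋₊ : ℝ) * (L:ℝ) :=
            mul_le_mul_of_nonneg_right (h2'.trans h1') hLpos.le
    have hexp_pos : 0 < α' / α := div_pos (by linarith) (by linarith)
    have hKnonneg : (0:ℝ) ≤ (L:ℝ) ^ α / 2 :=
      div_nonneg (Real.rpow_nonneg hLpos.le _) (by norm_num)
    have step1 : ((L:ℝ) ^ α / 2) ^ (α'/α) ≤ (scaleSeq α l₁ (m+2) : ℝ) ^ (α'/α) :=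
      Real.rpow_le_rpow hKnonneg hKlow hexp_pos.le
    have step2 : ((L:ℝ) ^ α / 2) ^ (α'/α) = (L:ℝ) ^ α' / (2:ℝ) ^ (α'/α) := by
      rw [Real.div_rpow (Real.rpow_nonneg hLpos.le _) (by norm_num),
        ← Real.rpow_mul hLpos.le]
      congr 1
      field_simp
    have h2exp : (2:ℝ) ^ (α'/α) ≤ 2 := by
      have : (2:ℝ) ^ (α'/α) ≤ (2:ℝ) ^ (1:ℝ) :=
        Real.rpow_le_rpow_of_exponent_le (by norm_num)
          (by rw [div_le_one (by linarith)]; linarith)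
      rwa [Real.rpow_one] at this
    have h2exp_pos : (0:ℝ) < (2:ℝ) ^ (α'/α) := Real.rpow_pos_of_pos (by norm_num) _
    have hLα' : 18 * (L:ℝ) ≤ (L:ℝ) ^ α' := by
      have h := Real.rpow_add hLpos (α'-1) 1
      rw [Real.rpow_one] at h
      have : (L:ℝ) ^ (α'-1+1) = (L:ℝ) ^ α' := by norm_num
      rw [this] at h
      rw [h]
      exact mul_le_mul_of_nonneg_right hb2 hLpos.le
    have step3 : 9 * (L:ℝ) ≤ (L:ℝ) ^ α' / (2:ℝ) ^ (α'/α) := by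
      rw [le_div_iff₀ h2exp_pos]
      calc 9 * (L:ℝ) * (2:ℝ) ^ (α'/α) ≤ 9 * (L:ℝ) * 2 := by
            have h9L : (0:ℝ) ≤ 9 * (L:ℝ) := by positivity
            exact mul_le_mul_of_nonneg_left h2exp h9L
        _ = 18 * (L:ℝ) := by ring
        _ ≤ (L:ℝ) ^ α' := hLα'
    calc 3 * (L:ℝ) + 6 * (scaleSeq α l₁ m : ℝ) ≤ 9 * (L:ℝ) := by linarith
      _ ≤ (L:ℝ) ^ α' / (2:ℝ) ^ (α'/α) := step3
      _ = ((L:ℝ) ^ α / 2) ^ (α'/α) := step2.symm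
      _ ≤ _ := step1
end

section
/- Let 1 < α′ < α < 2 and let δ > α′ − 1. There exists an integer l₁* ≥ 2 such that for every integer l₁ ≥ l₁*, with the scales l_k defined by l₀ = 1 and l_k = ⌊l_{k−1}^{α−1}⌋·l_{k−1} for k ≥ 2, one has: (i) Σ_{k=2}^∞ l_{k−1}^{−δ} · ⌊ ⌊l_k^{α′/α}⌋ / l_{k−1} ⌋ ≤ Σ_{k=2}^∞ l_{k−1}^{−δ + α′ − 1} < ∞; and (ii) the infinite product ∏_{k=2}^∞ (1 − l_{k−1}^{−δ})^{⌊⌊l_k^{α′/α}⌋ / l_{k−1}⌋} converges to a strictly positive limit. -/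
open Filter Real

theorem neg_log_one_sub_le_two_mul {x : ℝ} (hx₀ : 0 ≤ x) (hx : x ≤ 1 / 2) :
    -log (1 - x) ≤ 2 * x := by
  have hpos : 0 < 1 - x := by linarith
  have hinv : (1 - x)⁻¹ ≤ 1 + 2 * x := by
    rw [inv_le_iff_one_le_mul₀ hpos]
    nlinarith
  linarith [one_sub_inv_le_log_of_pos hpos]

theorem exists_pos_hasProd_one_sub_pow {ι : Type*} {x : ι → ℝ} {n : ι → ℕ}
    (hx₀ : ∀ i, 0 ≤ x i) (hx : ∀ i, x i ≤ 1 / 2) (hs : Summable fun i ↦ x i * n i) :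
    ∃ a, 0 < a ∧ HasProd (fun i ↦ (1 - x i) ^ n i) a := by
  have hlog : Summable fun i ↦ log ((1 - x i) ^ n i) := by
    refine (hs.mul_left 2).of_norm_bounded fun i ↦ ?_
    have hneg : log (1 - x i) ≤ 0 := log_nonpos (by linarith [hx i]) (by linarith [hx₀ i])
    rw [log_pow, norm_eq_abs, abs_mul, Nat.abs_cast, abs_of_nonpos hneg]
    nlinarith [neg_log_one_sub_le_two_mul (hx₀ i) (hx i), (n i).cast_nonneg (α := ℝ)]
  exact ⟨_, exp_pos _,
    hasProd_of_hasSum_log (fun i ↦ pow_pos (by linarith [hx i]) _) hlog.hasSum⟩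

theorem summable_rpow_neg_of_two_pow_le {u : ℕ → ℝ} {ε : ℝ} (hε : 0 < ε)
    (hu : ∀ j, 2 ^ j ≤ u j) : Summable fun j ↦ u j ^ (-ε) := by
  refine (summable_geometric_of_lt_one (by positivity)
      (rpow_lt_one_of_one_lt_of_neg one_lt_two (neg_neg_of_pos hε))).of_nonneg_of_le
    (fun j ↦ rpow_nonneg ((by positivity : (0 : ℝ) ≤ 2 ^ j).trans (hu j)) _) fun j ↦ ?_
  calc u j ^ (-ε) ≤ ((2 : ℝ) ^ j) ^ (-ε) :=
        rpow_le_rpow_of_nonpos (by positivity) (hu j) (by linarith)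
    _ = ((2 : ℝ) ^ (-ε)) ^ j := by
        rw [← rpow_natCast, ← rpow_mul zero_le_two, ← rpow_natCast, ← rpow_mul zero_le_two,
          mul_comm]

theorem cast_floor_rpow_div_le {α α' : ℝ} {m n : ℕ} (hα : 0 < α) (hα' : 0 ≤ α')
    (hm : (m : ℝ) ≤ (n : ℝ) ^ α) :
    ((⌊(m : ℝ) ^ (α' / α)⌋₊ / n : ℕ) : ℝ) ≤ (n : ℝ) ^ (α' - 1) := by
  rcases n.eq_zero_or_pos with rfl | hn
  · simp only [Nat.div_zero, Nat.cast_zero]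
    positivity
  have hn' : (0 : ℝ) < n := by exact_mod_cast hn
  calc ((⌊(m : ℝ) ^ (α' / α)⌋₊ / n : ℕ) : ℝ) ≤ ⌊(m : ℝ) ^ (α' / α)⌋₊ / n := Nat.cast_div_le
    _ ≤ (m : ℝ) ^ (α' / α) / n := by gcongr; exact Nat.floor_le (by positivity)
    _ ≤ ((n : ℝ) ^ α) ^ (α' / α) / n := by gcongr
    _ = (n : ℝ) ^ (α' - 1) := by
        rw [← rpow_mul hn'.le, mul_div_cancel₀ _ hα.ne', rpow_sub_one hn'.ne']

theorem eventually_two_le_rpow {p : ℝ} (hp : 0 < p) : ∀ᶠ n : ℕ in atTop, 2 ≤ (n : ℝ) ^ p :=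
  ((tendsto_rpow_atTop hp).comp tendsto_natCast_atTop_atTop).eventually_ge_atTop 2

theorem Nat.one_le_of_two_le_cast_rpow {n : ℕ} {p : ℝ} (h : 2 ≤ (n : ℝ) ^ p) : 1 ≤ n :=
  Nat.one_le_iff_ne_zero.2 fun hn ↦ by
    rw [hn, Nat.cast_zero] at h
    linarith [zero_rpow_le_one p]

section scaleSeq

variable {α : ℝ} {l₁ : ℕ}

theorem scaleSeq_add_two (k : ℕ) :
    scaleSeq α l₁ (k + 2) = ⌊(scaleSeq α l₁ (k + 1) : ℝ) ^ (α - 1)⌋₊ * scaleSeq α l₁ (k + 1) :=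
  rfl

theorem cast_scaleSeq_add_two_le (k : ℕ) :
    (scaleSeq α l₁ (k + 2) : ℝ) ≤ (scaleSeq α l₁ (k + 1) : ℝ) ^ α := by
  rw [scaleSeq_add_two, Nat.cast_mul]
  set l := (scaleSeq α l₁ (k + 1) : ℝ)
  have hl : 0 ≤ l := Nat.cast_nonneg _
  rcases hl.eq_or_lt with hl0 | hl0
  · rw [← hl0, mul_zero]
    exact rpow_nonneg le_rfl _
  calc (⌊l ^ (α - 1)⌋₊ : ℝ) * l ≤ l ^ (α - 1) * l := by
        gcongr; exact Nat.floor_le (rpow_nonneg hl _)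
    _ = l ^ α := by rw [← rpow_add_one hl0.ne', sub_add_cancel]

theorem le_scaleSeq_add_one (hα : 1 ≤ α) (hl₁ : 1 ≤ l₁) (k : ℕ) : l₁ ≤ scaleSeq α l₁ (k + 1) := by
  induction k with
  | zero => exact le_rfl
  | succ k ih =>
    rw [scaleSeq_add_two]
    have hfloor : 1 ≤ ⌊(scaleSeq α l₁ (k + 1) : ℝ) ^ (α - 1)⌋₊ :=
      Nat.le_floor (by
        rw [Nat.cast_one]
        exact one_le_rpow (by exact_mod_cast hl₁.trans ih) (by linarith))
    exact ih.trans (Nat.le_mul_of_pos_left _ hfloor)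

theorem two_mul_scaleSeq_add_one_le (hα : 1 ≤ α) (hl₁ : 2 ≤ (l₁ : ℝ) ^ (α - 1)) (k : ℕ) :
    2 * scaleSeq α l₁ (k + 1) ≤ scaleSeq α l₁ (k + 2) := by
  rw [scaleSeq_add_two]
  refine Nat.mul_le_mul_right _ (Nat.le_floor ?_)
  calc ((2 : ℕ) : ℝ) ≤ (l₁ : ℝ) ^ (α - 1) := by exact_mod_cast hl₁
    _ ≤ (scaleSeq α l₁ (k + 1) : ℝ) ^ (α - 1) :=
        rpow_le_rpow (Nat.cast_nonneg _)
          (by exact_mod_cast le_scaleSeq_add_one hα (Nat.one_le_of_two_le_cast_rpow hl₁) k)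
          (by linarith)

theorem two_pow_le_scaleSeq_add_one (hα : 1 ≤ α) (hl₁ : 2 ≤ (l₁ : ℝ) ^ (α - 1)) (k : ℕ) :
    (2 : ℝ) ^ k ≤ scaleSeq α l₁ (k + 1) := by
  induction k with
  | zero => exact_mod_cast Nat.one_le_of_two_le_cast_rpow hl₁
  | succ k ih =>
    calc (2 : ℝ) ^ (k + 1) = 2 * 2 ^ k := pow_succ' 2 k
      _ ≤ 2 * scaleSeq α l₁ (k + 1) := by gcongr
      _ ≤ scaleSeq α l₁ (k + 2) := by exact_mod_cast two_mul_scaleSeq_add_one_le hα hl₁ k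

end scaleSeq

theorem scale_series_and_product_general (α α' δ : ℝ) (h1 : 1 < α') (h2 : α' < α)
    (hδ : α' - 1 < δ) :
    ∃ l₁star : ℕ, 2 ≤ l₁star ∧ ∀ l₁ : ℕ, l₁star ≤ l₁ →
      (Summable (fun j : ℕ =>
          (scaleSeq α l₁ (j + 1) : ℝ) ^ (-δ) *
            ((Nat.floor ((scaleSeq α l₁ (j + 2) : ℝ) ^ (α' / α)) / scaleSeq α l₁ (j + 1) : ℕ)
              : ℝ)) ∧
       Summable (fun j : ℕ => (scaleSeq α l₁ (j + 1) : ℝ) ^ (-δ + α' - 1)) ∧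
       (∑' j : ℕ,
          (scaleSeq α l₁ (j + 1) : ℝ) ^ (-δ) *
            ((Nat.floor ((scaleSeq α l₁ (j + 2) : ℝ) ^ (α' / α)) / scaleSeq α l₁ (j + 1) : ℕ)
              : ℝ)) ≤
         ∑' j : ℕ, (scaleSeq α l₁ (j + 1) : ℝ) ^ (-δ + α' - 1)) ∧
      (Multipliable (fun j : ℕ =>
          (1 - (scaleSeq α l₁ (j + 1) : ℝ) ^ (-δ)) ^
            (Nat.floor ((scaleSeq α l₁ (j + 2) : ℝ) ^ (α' / α)) / scaleSeq α l₁ (j + 1))) ∧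
       0 < ∏' j : ℕ,
          (1 - (scaleSeq α l₁ (j + 1) : ℝ) ^ (-δ)) ^
            (Nat.floor ((scaleSeq α l₁ (j + 2) : ℝ) ^ (α' / α)) / scaleSeq α l₁ (j + 1))) := by
  have hα : 1 < α := h1.trans h2
  have hδ₀ : 0 < δ := (sub_pos.2 h1).trans hδ
  obtain ⟨l₁star, hstar⟩ := eventually_atTop.1 ((eventually_ge_atTop 2).and
    ((eventually_two_le_rpow (sub_pos.2 hα)).and (eventually_two_le_rpow hδ₀)))
  refine ⟨l₁star, (hstar l₁star le_rfl).1, fun l₁ hl₁ ↦ ?_⟩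
  obtain ⟨-, hgrowth, hsmall⟩ := hstar l₁ hl₁
  have hdouble := two_pow_le_scaleSeq_add_one hα.le hgrowth
  have hpos (j : ℕ) : (0 : ℝ) < scaleSeq α l₁ (j + 1) := (pow_pos two_pos j).trans_le (hdouble j)
  have hterm (j : ℕ) : (scaleSeq α l₁ (j + 1) : ℝ) ^ (-δ) *
      ((Nat.floor ((scaleSeq α l₁ (j + 2) : ℝ) ^ (α' / α)) / scaleSeq α l₁ (j + 1) : ℕ) : ℝ) ≤
      (scaleSeq α l₁ (j + 1) : ℝ) ^ (-δ + α' - 1) :=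
    calc _ ≤ (scaleSeq α l₁ (j + 1) : ℝ) ^ (-δ) * (scaleSeq α l₁ (j + 1) : ℝ) ^ (α' - 1) := by
          gcongr
          exact cast_floor_rpow_div_le (by linarith) (by linarith) (cast_scaleSeq_add_two_le j)
      _ = _ := by rw [← rpow_add (hpos j), add_sub_assoc]
  have hsum : Summable fun j : ℕ ↦ (scaleSeq α l₁ (j + 1) : ℝ) ^ (-δ + α' - 1) := by
    rw [show -δ + α' - 1 = -(δ - α' + 1) by ring]
    exact summable_rpow_neg_of_two_pow_le (by linarith) hdouble
  have hsum' := hsum.of_nonneg_of_le (fun j ↦ by positivity) hterm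
  have hfactor (j : ℕ) : (scaleSeq α l₁ (j + 1) : ℝ) ^ (-δ) ≤ 1 / 2 := by
    have hl₁_le : (l₁ : ℝ) ≤ scaleSeq α l₁ (j + 1) := by
      exact_mod_cast le_scaleSeq_add_one hα.le (Nat.one_le_of_two_le_cast_rpow hgrowth) j
    rw [rpow_neg (hpos j).le, one_div]
    gcongr
    exact hsmall.trans (by gcongr)
  obtain ⟨a, ha, hprod⟩ := exists_pos_hasProd_one_sub_pow (fun j ↦ by positivity) hfactor hsum'
  exact ⟨⟨hsum', hsum, hsum'.tsum_le_tsum hterm hsum⟩, hprod.multipliable, hprod.tprod_eq ▸ ha⟩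

/-- For `δ > α' - 1` and `l₁` large enough:
(i) `Σ_{k≥2} l_{k-1}^{-δ} ⌊⌊l_k^{α'/α}⌋ / l_{k-1}⌋ ≤ Σ_{k≥2} l_{k-1}^{-δ+α'-1} < ∞`, and
(ii) `∏_{k≥2} (1 - l_{k-1}^{-δ})^{⌊⌊l_k^{α'/α}⌋ / l_{k-1}⌋}` converges to a positive limit.
(Sums and products are indexed by `k = j + 2`, `j : ℕ`.) -/
theorem scale_series_and_product (α α' δ : ℝ) (h1 : 1 < α') (h2 : α' < α) (h3 : α < 2)
    (hδ : α' - 1 < δ) :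
    ∃ l₁star : ℕ, 2 ≤ l₁star ∧ ∀ l₁ : ℕ, l₁star ≤ l₁ →
      (Summable (fun j : ℕ =>
          (scaleSeq α l₁ (j + 1) : ℝ) ^ (-δ) *
            ((Nat.floor ((scaleSeq α l₁ (j + 2) : ℝ) ^ (α' / α)) / scaleSeq α l₁ (j + 1) : ℕ)
              : ℝ)) ∧
       Summable (fun j : ℕ => (scaleSeq α l₁ (j + 1) : ℝ) ^ (-δ + α' - 1)) ∧
       (∑' j : ℕ,
          (scaleSeq α l₁ (j + 1) : ℝ) ^ (-δ) *
            ((Nat.floor ((scaleSeq α l₁ (j + 2) : ℝ) ^ (α' / α)) / scaleSeq α l₁ (j + 1) : ℕ)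
              : ℝ)) ≤
         ∑' j : ℕ, (scaleSeq α l₁ (j + 1) : ℝ) ^ (-δ + α' - 1)) ∧
      (Multipliable (fun j : ℕ =>
          (1 - (scaleSeq α l₁ (j + 1) : ℝ) ^ (-δ)) ^
            (Nat.floor ((scaleSeq α l₁ (j + 2) : ℝ) ^ (α' / α)) / scaleSeq α l₁ (j + 1))) ∧
       0 < ∏' j : ℕ,
          (1 - (scaleSeq α l₁ (j + 1) : ℝ) ^ (-δ)) ^
            (Nat.floor ((scaleSeq α l₁ (j + 2) : ℝ) ^ (α' / α)) / scaleSeq α l₁ (j + 1))) :=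
  scale_series_and_product_general α α' δ h1 h2 hδ
end

section
/- Let β > 0, let m ≥ 1 and d ≥ 3 be integers, and set S = {0,1,…,m} and S′ = {m+d, m+d+1,…, 2m+d}. Under the Bernoulli product measure ν = ν_{p,β}, the probability that every edge {x,y} with x ∈ S and y ∈ S′ is closed equals exp( −β Σ_{x∈S, y∈S′} (y−x)^{−2} ), and this is at most ( d(2m+d) / (m+d)² )^{β(1−2/d)²}. -/
open MeasureTheory ProbabilityTheory

/-- Edge occupation probability: `p` for nearest neighbours, `1 - exp(-β/|x-y|²)` otherwise. -/
noncomputable def edgeProb (p β : ℝ) (x y : ℤ) : ℝ :=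
  if (x - y).natAbs = 1 then p else 1 - Real.exp (-β / ((x - y : ℤ) : ℝ) ^ 2)

/-- `ν` is the Bernoulli product measure `ν_{p,β}`. -/
def IsBernoulliEdgeMeasure (p β : ℝ) (ν : Measure (Sym2 ℤ → Bool)) : Prop :=
  iIndepFun (fun (e : Sym2 ℤ) (ω : Sym2 ℤ → Bool) => ω e) ν ∧
    ∀ x y : ℤ, x ≠ y → ν {ω | ω s(x, y) = true} = ENNReal.ofReal (edgeProb p β x y)

/-!
By independence, the probability that all edges between `S` and `S'` are closed is the product
of the closing probabilities `exp (-β / (y - x)²)`, i.e. the exponential of `-β` times the double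
sum. Writing `y - x = d + i + j` with `0 ≤ i, j ≤ m`, the double sum is bounded below by
telescoping twice: `1 / k² ≥ 1 / k - 1 / (k + 1)` collapses the inner sum, and
`1 / (a + 1) ≤ log (a + 1) - log a ≤ 1 / a` turns the outer sums into logarithms. This yields
`log ((m + d)² / (d (2m + d)))`, which already dominates the claimed exponent since
`(1 - 2 / d)² ≤ 1`.
-/

open Finset Real

lemma log_add_one_sub_log_le_inv {a : ℝ} (ha : 0 < a) : log (a + 1) - log a ≤ a⁻¹ := by
  have h := log_le_sub_one_of_pos (show 0 < (a + 1) / a by positivity)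
  rw [log_div (by positivity) ha.ne'] at h
  rwa [add_div, div_self ha.ne', one_div, add_sub_cancel_left] at h

lemma inv_add_one_le_log_add_one_sub_log {a : ℝ} (ha : 0 < a) :
    (a + 1)⁻¹ ≤ log (a + 1) - log a := by
  have h := one_sub_inv_le_log_of_pos (show 0 < (a + 1) / a by positivity)
  rw [log_div (by positivity) ha.ne', inv_div] at h
  convert h using 1
  field_simp
  ring

lemma log_add_sub_log_le_sum_inv {t : ℝ} (ht : 0 < t) (n : ℕ) :
    log (t + n) - log t ≤ ∑ i ∈ range n, (t + i)⁻¹ := by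
  have htel := sum_range_sub (fun i : ℕ => log (t + i)) n
  simp only [Nat.cast_add, Nat.cast_one, Nat.cast_zero, add_zero] at htel
  rw [← htel]
  gcongr with i
  rw [← add_assoc]
  exact log_add_one_sub_log_le_inv (by positivity)

lemma sum_inv_add_one_le_log_add_sub_log {t : ℝ} (ht : 0 < t) (n : ℕ) :
    ∑ i ∈ range n, (t + 1 + i)⁻¹ ≤ log (t + n) - log t := by
  have htel := sum_range_sub (fun i : ℕ => log (t + i)) n
  simp only [Nat.cast_add, Nat.cast_one, Nat.cast_zero, add_zero] at htel
  rw [← htel]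
  gcongr with i
  rw [add_right_comm, ← add_assoc]
  exact inv_add_one_le_log_add_one_sub_log (by positivity)

lemma inv_sub_inv_add_le_sum_inv_sq {t : ℝ} (ht : 0 < t) (n : ℕ) :
    t⁻¹ - (t + n)⁻¹ ≤ ∑ j ∈ range n, ((t + j) ^ 2)⁻¹ := by
  have htel := sum_range_sub' (fun j : ℕ => (t + j)⁻¹) n
  simp only [Nat.cast_add, Nat.cast_one, Nat.cast_zero, add_zero] at htel
  rw [← htel]
  gcongr with j
  have hk : 0 < t + j := by positivity
  rw [← add_assoc, inv_sub_inv hk.ne' (by positivity), add_sub_cancel_left, one_div, sq]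
  exact inv_anti₀ (by positivity) (mul_le_mul_of_nonneg_left (by linarith) hk.le)

lemma log_sq_div_le_sum_inv_sq {d : ℝ} (hd : 0 < d) (m : ℕ) :
    log ((m + d) ^ 2 / (d * (2 * m + d))) ≤
      ∑ i ∈ range (m + 1), ∑ j ∈ range (m + 1), ((d + i + j) ^ 2)⁻¹ := by
  have hm : (0 : ℝ) ≤ m := m.cast_nonneg
  calc log ((m + d) ^ 2 / (d * (2 * m + d)))
      ≤ (log (d + (m + 1 : ℕ)) - log d) - (log (d + m + (m + 1 : ℕ)) - log (d + m)) := by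
        have hmono : (m + d) ^ 2 / (d * (2 * m + d)) ≤
            (d + m + 1) * (d + m) / (d * (d + 2 * m + 1)) := by
          rw [div_le_div_iff₀ (by positivity) (by positivity)]
          -- the two cross products differ by `d (d + m) m`
          nlinarith [mul_nonneg (mul_nonneg hd.le (add_nonneg hd.le hm)) hm]
        refine (log_le_log (by positivity) hmono).trans_eq ?_
        push_cast
        rw [log_div (by positivity) (by positivity), log_mul (by positivity) (by positivity),
          log_mul (by positivity) (by positivity)]
        ring_nf
    _ ≤ ∑ i ∈ range (m + 1), (d + i)⁻¹ - ∑ i ∈ range (m + 1), (d + m + 1 + i)⁻¹ :=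
        sub_le_sub (log_add_sub_log_le_sum_inv hd _)
          (sum_inv_add_one_le_log_add_sub_log (by positivity) _)
    _ = ∑ i ∈ range (m + 1), ((d + i)⁻¹ - (d + i + (m + 1 : ℕ))⁻¹) := by
        rw [← sum_sub_distrib]
        refine sum_congr rfl fun i _ => ?_
        push_cast
        ring_nf
    _ ≤ ∑ i ∈ range (m + 1), ∑ j ∈ range (m + 1), ((d + i + j) ^ 2)⁻¹ := by
        gcongr with i
        exact inv_sub_inv_add_le_sum_inv_sq (by positivity) _

lemma sum_Icc_sub_eq_sum_range (m d : ℕ) (f : ℤ → ℝ) :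
    ∑ x ∈ Icc (0 : ℤ) m, ∑ y ∈ Icc ((m : ℤ) + d) (2 * m + d), f (y - x) =
      ∑ i ∈ range (m + 1), ∑ j ∈ range (m + 1), f (d + i + j) := by
  refine sum_nbij' (fun x => (m - x).toNat) (fun i => m - i) ?_ ?_ ?_ ?_ fun x hx =>
    sum_nbij' (fun y => (y - m - d).toNat) (fun j => m + d + j) ?_ ?_ ?_ ?_ fun y hy => ?_
  all_goals
    intros
    simp only [mem_Icc, mem_range] at *
    first | omega | (congr 1; omega)

namespace IsBernoulliEdgeMeasure

variable {p β : ℝ} {ν : Measure (Sym2 ℤ → Bool)}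

lemma measure_edge_closed [IsProbabilityMeasure ν] (hν : IsBernoulliEdgeMeasure p β ν)
    (hβ : 0 ≤ β) {x y : ℤ} (hxy : 1 < (x - y).natAbs) :
    ν {ω | ω s(x, y) = false} = ENNReal.ofReal (exp (-β / ((x - y : ℤ) : ℝ) ^ 2)) := by
  have hexp_le_one : exp (-β / ((x - y : ℤ) : ℝ) ^ 2) ≤ 1 :=
    exp_le_one_iff.mpr (div_nonpos_of_nonpos_of_nonneg (neg_nonpos.mpr hβ) (sq_nonneg _))
  have hopen : MeasurableSet {ω : Sym2 ℤ → Bool | ω s(x, y) = true} :=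
    show MeasurableSet ((fun ω : Sym2 ℤ → Bool => ω s(x, y)) ⁻¹' {true}) from
      measurable_pi_apply _ (measurableSet_singleton true)
  have hcompl : {ω : Sym2 ℤ → Bool | ω s(x, y) = false} = {ω | ω s(x, y) = true}ᶜ := by
    ext ω
    simp
  rw [hcompl, prob_compl_eq_one_sub hopen, hν.2 x y (by omega), edgeProb, if_neg hxy.ne',
    ← ENNReal.ofReal_one, ← ENNReal.ofReal_sub _ (sub_nonneg.mpr hexp_le_one), sub_sub_cancel]

lemma measure_cross_edges_closed [IsProbabilityMeasure ν] (hν : IsBernoulliEdgeMeasure p β ν)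
    (hβ : 0 ≤ β) {S S' : Finset ℤ} (hSS' : ∀ x ∈ S, ∀ y ∈ S', x + 2 ≤ y) :
    ν {ω | ∀ x ∈ S, ∀ y ∈ S', ω s(x, y) = false} =
      ENNReal.ofReal (exp (-β * ∑ x ∈ S, ∑ y ∈ S', (((y - x : ℤ) : ℝ) ^ 2)⁻¹)) := by
  have hinj : Set.InjOn (fun q : ℤ × ℤ => s(q.1, q.2)) ↑(S ×ˢ S') := by
    rintro ⟨x, y⟩ hxy ⟨x', y'⟩ hxy' h
    simp only [coe_product, Set.mem_prod, mem_coe] at hxy hxy'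
    have := hSS' _ hxy.1 _ hxy.2
    have := hSS' _ hxy'.1 _ hxy'.2
    rcases Sym2.eq_iff.mp h with ⟨rfl, rfl⟩ | ⟨rfl, rfl⟩
    · rfl
    · omega
  have hset : {ω : Sym2 ℤ → Bool | ∀ x ∈ S, ∀ y ∈ S', ω s(x, y) = false} =
      ⋂ e ∈ (S ×ˢ S').image (fun q => s(q.1, q.2)), {ω | ω e = false} := by
    ext ω
    simp only [Set.mem_ofPred_eq, Set.mem_iInter, mem_image, mem_product, Prod.exists]
    exact ⟨fun h e ⟨x, y, ⟨hx, hy⟩, he⟩ => he ▸ h x hx y hy,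
      fun h x hx y hy => h _ ⟨x, y, ⟨hx, hy⟩, rfl⟩⟩
  rw [hset, hν.1.meas_biInter (s := fun e => {ω | ω e = false})
      fun _ _ => ⟨{false}, trivial, rfl⟩, prod_image hinj,
    ← sum_product' S S' fun x y => (((y - x : ℤ) : ℝ) ^ 2)⁻¹, mul_sum, exp_sum,
    ENNReal.ofReal_prod_of_nonneg fun _ _ => (exp_pos _).le]
  refine prod_congr rfl fun ⟨x, y⟩ hxy => ?_
  have := hSS' x (mem_product.mp hxy).1 y (mem_product.mp hxy).2
  rw [hν.measure_edge_closed hβ (by omega), div_eq_mul_inv]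
  push_cast
  rw [sub_sq_comm]

end IsBernoulliEdgeMeasure

theorem all_edges_closed_estimate_general (β p : ℝ) (hβ : 0 < β)
    (m d : ℕ) (hd : 3 ≤ d)
    (ν : Measure (Sym2 ℤ → Bool)) [IsProbabilityMeasure ν]
    (hν : IsBernoulliEdgeMeasure p β ν) :
    ν {ω | ∀ x ∈ Finset.Icc (0 : ℤ) (m : ℤ),
        ∀ y ∈ Finset.Icc ((m : ℤ) + (d : ℤ)) (2 * (m : ℤ) + (d : ℤ)), ω s(x, y) = false} =
      ENNReal.ofReal (Real.exp (-β *
        ∑ x ∈ Finset.Icc (0 : ℤ) (m : ℤ),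
          ∑ y ∈ Finset.Icc ((m : ℤ) + (d : ℤ)) (2 * (m : ℤ) + (d : ℤ)),
            (((y - x : ℤ) : ℝ) ^ 2)⁻¹)) ∧
    ν {ω | ∀ x ∈ Finset.Icc (0 : ℤ) (m : ℤ),
        ∀ y ∈ Finset.Icc ((m : ℤ) + (d : ℤ)) (2 * (m : ℤ) + (d : ℤ)), ω s(x, y) = false} ≤
      ENNReal.ofReal
        (((d : ℝ) * (2 * (m : ℝ) + (d : ℝ)) / ((m : ℝ) + (d : ℝ)) ^ 2) ^
          (β * (1 - 2 / (d : ℝ)) ^ 2)) := by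
  have hclosed := hν.measure_cross_edges_closed hβ.le
      (S := Icc 0 m) (S' := Icc ((m : ℤ) + d) (2 * m + d)) fun x hx y hy => by
    rw [mem_Icc] at hx hy
    omega
  refine ⟨hclosed, hclosed.trans_le (ENNReal.ofReal_le_ofReal ?_)⟩
  have hd0 : (0 : ℝ) < d := by positivity
  have hsum : log ((m + d) ^ 2 / (d * (2 * m + d))) ≤
      ∑ x ∈ Icc (0 : ℤ) m, ∑ y ∈ Icc ((m : ℤ) + d) (2 * m + d),
        (((y - x : ℤ) : ℝ) ^ 2)⁻¹ := by
    rw [sum_Icc_sub_eq_sum_range m d fun k => ((k : ℝ) ^ 2)⁻¹]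
    push_cast
    exact log_sq_div_le_sum_inv_sq hd0 m
  have hlog_nonneg : 0 ≤ log ((m + d) ^ 2 / (d * (2 * m + d))) :=
    log_nonneg <| (one_le_div (by positivity)).mpr (by nlinarith)
  have hfactor : (1 - 2 / (d : ℝ)) ^ 2 ≤ 1 := by
    have : 2 / (d : ℝ) ≤ 1 := (div_le_one hd0).mpr (by exact_mod_cast (by omega : 2 ≤ d))
    exact pow_le_one₀ (by linarith) (by linarith [div_nonneg zero_le_two hd0.le])
  rw [rpow_def_of_pos (by positivity), exp_le_exp, ← inv_div, log_inv]
  linarith [mul_le_mul_of_nonneg_left hsum hβ.le,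
    mul_le_mul_of_nonneg_left hfactor (mul_nonneg hβ.le hlog_nonneg)]

/-- With `S = {0,…,m}` and `S' = {m+d,…,2m+d}`, `d ≥ 3`, the probability that all edges
between `S` and `S'` are closed equals `exp(-β Σ_{x∈S,y∈S'} (y-x)^{-2})`, which is at most
`(d(2m+d)/(m+d)²)^{β(1-2/d)²}`. -/
theorem all_edges_closed_estimate (β p : ℝ) (hβ : 0 < β) (hp0 : 0 < p) (hp1 : p < 1)
    (m d : ℕ) (hm : 1 ≤ m) (hd : 3 ≤ d)
    (ν : Measure (Sym2 ℤ → Bool)) [IsProbabilityMeasure ν]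
    (hν : IsBernoulliEdgeMeasure p β ν) :
    ν {ω | ∀ x ∈ Finset.Icc (0 : ℤ) (m : ℤ),
        ∀ y ∈ Finset.Icc ((m : ℤ) + (d : ℤ)) (2 * (m : ℤ) + (d : ℤ)), ω s(x, y) = false} =
      ENNReal.ofReal (Real.exp (-β *
        ∑ x ∈ Finset.Icc (0 : ℤ) (m : ℤ),
          ∑ y ∈ Finset.Icc ((m : ℤ) + (d : ℤ)) (2 * (m : ℤ) + (d : ℤ)),
            (((y - x : ℤ) : ℝ) ^ 2)⁻¹)) ∧
    ν {ω | ∀ x ∈ Finset.Icc (0 : ℤ) (m : ℤ),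
        ∀ y ∈ Finset.Icc ((m : ℤ) + (d : ℤ)) (2 * (m : ℤ) + (d : ℤ)), ω s(x, y) = false} ≤
      ENNReal.ofReal
        (((d : ℝ) * (2 * (m : ℝ) + (d : ℝ)) / ((m : ℝ) + (d : ℝ)) ^ 2) ^
          (β * (1 - 2 / (d : ℝ)) ^ 2)) :=
  all_edges_closed_estimate_general β p hβ m d hd ν hν
end
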